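/- Let k ≥ 2, t ≥ 1, and let G, H be colored graphs whose (k+t)-WL color histograms are equal. Then for all v₁∈V(G)^k, v₂∈V(H)^k, w₁∈V(G)^t, w₂∈V(H)^t with equal stable (k+t)-WL colors, C^∞_{(k+t)wl}((v₁,w₁)) = C^∞_{(k+t)wl}((v₂,w₂)), the stable extended (k,t)-FWL colors are also equal: C^∞_{ktfwl}((v₁,w₁)) = C^∞_{ktfwl}((v₂,w₂)). -/

import Mathlib

/-!
Common formalization of colored graphs, the k-dimensional Weisfeiler-Lehman (WL) test,
the (k,t)-dimensional Folklore WL test (k,t)-FWL and its extension (k,t)-FWL+, together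
with the various specific refinement procedures (δ-k-LWL, GraphSNN, edge-based subgraph
refinement, KP-GNN, GDGNN, SLFWL(2), N²-FWL).

Convention: all colorings are formalized as explicitly-valued nested data (an injective
HASH is the identity).  "The stable colors (resp. color histograms) are equal" is rendered
as "the colors (resp. color histograms) at every iteration l are equal"; since the colors
at iteration l determine those at every earlier iteration and the partitions stabilize on
finite graphs, this is equivalent to equality of the stable colors.
-/

open Finset

noncomputable section

/-- A finite colored, undirected, simple graph. -/
structure ColoredGraph (C : Type) where
  V : Type
  fintypeV : Fintype V
  decEqV : DecidableEq V
  adj : V → V → Prop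
  symm : ∀ u v, adj u v → adj v u
  loopless : ∀ v, ¬ adj v v
  color : V → C

attribute [instance] ColoredGraph.fintypeV ColoredGraph.decEqV

/-- The data recording the isomorphism type of a `k`-tuple of vertices: the colors of the
entries, the equalities among entries, and the adjacencies among entries. -/
abbrev IsoType (C : Type) (k : ℕ) : Type :=
  (Fin k → C) × (Fin k → Fin k → Prop) × (Fin k → Fin k → Prop)

namespace ColoredGraph

variable {C : Type}

/-- The isomorphism type of a `k`-tuple of vertices.  Two tuples (possibly in different
graphs) have the same isomorphism type iff these values are equal. -/
def isoType (G : ColoredGraph C) {k : ℕ} (v : Fin k → G.V) : IsoType C k :=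
  (fun i => G.color (v i), fun i j => v i = v j, fun i j => G.adj (v i) (v j))

/-- The underlying simple graph. -/
def toSimple (G : ColoredGraph C) : SimpleGraph G.V where
  Adj := G.adj
  symm := ⟨by intro u v h; exact G.symm u v h⟩
  loopless := ⟨by intro v h; exact G.loopless v h⟩

/-- `Q₁(v)`: the set of neighbors of `v`. -/
def nbhd (G : ColoredGraph C) (v : G.V) : Finset G.V :=
  @Finset.filter _ (fun u => G.adj v u) (Classical.decPred _) Finset.univ

/-- `N₁(v)`: the closed neighborhood of `v`. -/
def closedNbhd (G : ColoredGraph C) (v : G.V) : Finset G.V :=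
  @Finset.filter _ (fun u => u = v ∨ G.adj v u) (Classical.decPred _) Finset.univ

/-- `N_h(v)`: the set of vertices within `h` hops of `v` (including `v`). -/
def ball (G : ColoredGraph C) (h : ℕ) (v : G.V) : Finset G.V :=
  @Finset.filter _ (fun u => ∃ p : G.toSimple.Walk v u, p.length ≤ h)
    (Classical.decPred _) Finset.univ

/-- `Q_d(v)`: the set of vertices at shortest-path distance exactly `d` from `v`. -/
def sphere (G : ColoredGraph C) (d : ℕ) (v : G.V) : Finset G.V :=
  @Finset.filter _ (fun u => G.toSimple.Reachable v u ∧ G.toSimple.dist v u = d)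
    (Classical.decPred _) Finset.univ

/-- `SP(v₁,v₂)`: the set of vertices lying on shortest paths between `v₁` and `v₂`
(with `SP(v,v) = {v}`). -/
def spSet (G : ColoredGraph C) (v₁ v₂ : G.V) : Finset G.V :=
  if v₁ = v₂ then {v₁}
  else
    @Finset.filter _
      (fun w => G.toSimple.Reachable v₁ w ∧ G.toSimple.Reachable w v₂ ∧
        G.toSimple.dist v₁ w + G.toSimple.dist w v₂ = G.toSimple.dist v₁ v₂)
      (Classical.decPred _) Finset.univ

/-- Isomorphism of colored graphs. -/
def Isomorphic (G H : ColoredGraph C) : Prop :=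
  ∃ φ : G.V ≃ H.V,
    (∀ u v : G.V, G.adj u v ↔ H.adj (φ u) (φ v)) ∧ ∀ v : G.V, H.color (φ v) = G.color v

end ColoredGraph

variable {C : Type}

/-- The type of `t`-fold nested (hierarchical) multisets over `α`. -/
def HMS (α : Type) : ℕ → Type
  | 0 => α
  | t + 1 => Multiset (HMS α t)

/-- The hierarchical multiset `{{x(w) : w ∈ S₁ × … × S_t}}_t`, grouped so that the
innermost multiset ranges over the first coordinate and the outermost over the last. -/
def hms {V α : Type} : (t : ℕ) → (Fin t → Finset V) → ((Fin t → V) → α) → HMS α t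
  | 0, _, x => x finZeroElim
  | t + 1, S, x =>
      (S (Fin.last t)).val.map fun wl =>
        hms t (fun i => S i.castSucc) fun w => x (Fin.snoc w wl)

/-- Replace the entries of `v` at the given indices by the given values. -/
def replaceList {V : Type} {k : ℕ} (v : Fin k → V) : List (Fin k × V) → (Fin k → V)
  | [] => v
  | p :: ps => Function.update (replaceList v ps) p.1 p.2

/-- The neighborhood tuple `Q^F_w(v)` of a `k`-tuple `v` with respect to a `t`-tuple `w`:
for each `m = 0, 1, …, min k t`, every `m`-subtuple of `w` (index sets in the fixed order
given by `List.sublistsLen`) is substituted into `v` at every increasing tuple of `m`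
positions (in the fixed order given by `List.sublistsLen`), and all resulting `k`-tuples
are concatenated in this fixed order (for `m = 0` this contributes `v` itself). -/
def nbhdTuple {V : Type} (k t : ℕ) (v : Fin k → V) (w : Fin t → V) : List (Fin k → V) :=
  (List.range (min k t + 1)).flatMap fun m =>
    ((List.finRange t).sublistsLen m).flatMap fun ws =>
      ((List.finRange k).sublistsLen m).map fun js =>
        replaceList v (js.zip (ws.map w))

/-! ### The k-WL colorings -/

/-- The type of `k`-WL colors at iteration `l`. -/
def WLColor (C : Type) (k : ℕ) : ℕ → Type
  | 0 => IsoType C k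
  | l + 1 => WLColor C k l × (Fin k → Multiset (WLColor C k l))

/-- The `k`-WL coloring of `k`-tuples at iteration `l`. -/
def wlColor (G : ColoredGraph C) (k : ℕ) : (l : ℕ) → (Fin k → G.V) → WLColor C k l
  | 0, v => G.isoType v
  | l + 1, v =>
      (wlColor G k l v,
        fun j => Finset.univ.val.map fun w => wlColor G k l (Function.update v j w))

/-- The `k`-WL color histogram of `G` at iteration `l`. -/
def wlHistogram (G : ColoredGraph C) (k l : ℕ) : Multiset (WLColor C k l) :=
  Finset.univ.val.map fun v => wlColor G k l v

/-! ### The (k,t)-FWL and (k,t)-FWL+ colorings -/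

/-- The type of `(k,t)`-FWL(+) colors at iteration `l` (hierarchical multiset version). -/
def FWLColor (C : Type) (k t : ℕ) : ℕ → Type
  | 0 => IsoType C k
  | l + 1 => FWLColor C k t l × HMS (List (FWLColor C k t l)) t

/-- The `(k,t)`-FWL+ coloring with the equivariant set `ES` given coordinatewise
(so that `w` ranges over `ES v 0 × … × ES v (t-1)`, aggregated hierarchically). -/
def fwlpColor (G : ColoredGraph C) (k t : ℕ) (ES : (Fin k → G.V) → Fin t → Finset G.V) :
    (l : ℕ) → (Fin k → G.V) → FWLColor C k t l
  | 0, v => G.isoType v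
  | l + 1, v =>
      (fwlpColor G k t ES l v,
        hms t (ES v) fun w => (nbhdTuple k t v w).map fun u => fwlpColor G k t ES l u)

/-- The `(k,t)`-FWL coloring (all coordinates of `w` range over all vertices). -/
def fwlColor (G : ColoredGraph C) (k t : ℕ) : (l : ℕ) → (Fin k → G.V) → FWLColor C k t l :=
  fwlpColor G k t fun _ _ => Finset.univ

/-- The `(k,t)`-FWL color histogram of `G` at iteration `l`. -/
def fwlHistogram (G : ColoredGraph C) (k t l : ℕ) : Multiset (FWLColor C k t l) :=
  Finset.univ.val.map fun v => fwlColor G k t l v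

/-- The extended `(k,t)`-FWL color of a `(k+t)`-tuple `p = (v, w)`:
`C^{l+1}(p) = (C^l(u) : u ∈ Q^F_w(v))`, recorded here at level `l`. -/
def fwlExtColor (G : ColoredGraph C) (k t l : ℕ) (v : Fin k → G.V) (w : Fin t → G.V) :
    List (FWLColor C k t l) :=
  (nbhdTuple k t v w).map fun u => fwlColor G k t l u

/-- The type of `(k,t)`-FWL+ colors at iteration `l` (plain multiset version). -/
def FWLPlainColor (C : Type) (k : ℕ) : ℕ → Type
  | 0 => IsoType C k
  | l + 1 => FWLPlainColor C k l × Multiset (List (FWLPlainColor C k l))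

/-- The `(k,t)`-FWL+ coloring with equivariant set `ES` given coordinatewise, aggregated
as a plain multiset over `ES v 0 × … × ES v (t-1)`. -/
def fwlpPlainColor (G : ColoredGraph C) (k t : ℕ)
    (ES : (Fin k → G.V) → Fin t → Finset G.V) :
    (l : ℕ) → (Fin k → G.V) → FWLPlainColor C k l
  | 0, v => G.isoType v
  | l + 1, v =>
      (fwlpPlainColor G k t ES l v,
        (Fintype.piFinset (ES v)).val.map fun w =>
          (nbhdTuple k t v w).map fun u => fwlpPlainColor G k t ES l u)

/-! ### δ-k-LWL -/

/-- The δ-k-LWL coloring. -/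
def dklwlColor (G : ColoredGraph C) (k : ℕ) : (l : ℕ) → (Fin k → G.V) → WLColor C k l
  | 0, v => G.isoType v
  | l + 1, v =>
      (dklwlColor G k l v,
        fun j => (G.nbhd (v j)).val.map fun w => dklwlColor G k l (Function.update v j w))

/-! ### SLFWL(2) -/

/-- The type of SLFWL(2) colors at iteration `l`. -/
def SLColor (C : Type) : ℕ → Type
  | 0 => IsoType C 2
  | l + 1 => SLColor C l × Multiset (SLColor C l × SLColor C l)

/-- The SLFWL(2) coloring of pairs of vertices. -/
def slColor (G : ColoredGraph C) : (l : ℕ) → G.V → G.V → SLColor C l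
  | 0, v₁, v₂ => G.isoType ![v₁, v₂]
  | l + 1, v₁, v₂ =>
      (slColor G l v₁ v₂,
        (G.closedNbhd v₁ ∪ G.closedNbhd v₂).val.map fun w =>
          (slColor G l v₁ w, slColor G l w v₂))

/-! ### The edge-based subgraph refinement (as in I²-GNN) -/

/-- The type of edge-based subgraph refinement colors at iteration `l`. -/
def EdgeColor (C : Type) : ℕ → Type
  | 0 => C × Prop × Prop
  | l + 1 => EdgeColor C l × Multiset (EdgeColor C l)

/-- The edge-based subgraph refinement: the color of `v₂` in the subgraph rooted at the
edge `(v₁, w₂)`; the initial color is `l_G(v₂)` together with markers for `v₂ = v₁` and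
`v₂ = w₂`. -/
def edgeColor (G : ColoredGraph C) : (l : ℕ) → G.V → G.V → G.V → EdgeColor C l
  | 0, v₁, v₂, w₂ => (G.color v₂, v₂ = v₁, v₂ = w₂)
  | l + 1, v₁, v₂, w₂ =>
      (edgeColor G l v₁ v₂ w₂, (G.nbhd v₂).val.map fun w₁ => edgeColor G l v₁ w₁ w₂)

/-- The graph color histogram of the edge-based subgraph refinement at iteration `l`:
`{{ {{ {{ C(v₁,v₂,w₂) : v₂ ∈ V }} : w₂ ∈ Q₁(v₁) }} : v₁ ∈ V }}`. -/
def edgeHistogram (G : ColoredGraph C) (l : ℕ) :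
    Multiset (Multiset (Multiset (EdgeColor C l))) :=
  Finset.univ.val.map fun v₁ =>
    (G.nbhd v₁).val.map fun w₂ => Finset.univ.val.map fun v₂ => edgeColor G l v₁ v₂ w₂

/-! ### GraphSNN -/

/-- `V_{v₁v₂}`: the vertex set of the overlapping 1-hop subgraph between `v₁` and `v₂`. -/
def snnOverlapVerts (G : ColoredGraph C) (v₁ v₂ : G.V) : Finset G.V :=
  G.closedNbhd v₁ ∩ G.closedNbhd v₂

/-- `|E_{v₁v₂}|`: the number of edges of `G` with both endpoints in `V_{v₁v₂}`
(ordered adjacent pairs counted once, i.e. divided by two). -/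
def snnEdgeCount (G : ColoredGraph C) (v₁ v₂ : G.V) : ℝ :=
  ((@Finset.filter (G.V × G.V)
      (fun p => p.1 ∈ snnOverlapVerts G v₁ v₂ ∧ p.2 ∈ snnOverlapVerts G v₁ v₂ ∧
        G.adj p.1 p.2)
      (Classical.decPred _) Finset.univ).card : ℝ) / 2

/-- The GraphSNN structural value `|E_{v₁v₂}|·|V_{v₁v₂}|^λ / (|V_{v₁v₂}|·(|V_{v₁v₂}|−1))`. -/
def snnVal (G : ColoredGraph C) (lam : ℝ) (v₁ v₂ : G.V) : ℝ :=
  (snnEdgeCount G v₁ v₂ * ((snnOverlapVerts G v₁ v₂).card : ℝ) ^ lam) /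
    (((snnOverlapVerts G v₁ v₂).card : ℝ) * (((snnOverlapVerts G v₁ v₂).card : ℝ) - 1))

/-- The type of GraphSNN colors at iteration `l`. -/
def SNNColor (C : Type) : ℕ → Type
  | 0 => IsoType C 2 ⊕ ℝ
  | l + 1 => (SNNColor C l × Multiset (SNNColor C l × SNNColor C l)) ⊕ ℝ

/-- The GraphSNN refinement: off-diagonal pairs get the fixed color `snnVal`; diagonal
pairs are refined iteratively. -/
def snnColor (G : ColoredGraph C) (lam : ℝ) : (l : ℕ) → G.V → G.V → SNNColor C l
  | 0, v₁, v₂ =>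
      if v₁ = v₂ then Sum.inl (G.isoType ![v₁, v₂]) else Sum.inr (snnVal G lam v₁ v₂)
  | l + 1, v₁, v₂ =>
      if v₁ = v₂ then
        Sum.inl (snnColor G lam l v₁ v₂,
          (G.nbhd v₁).val.map fun w => (snnColor G lam l v₁ w, snnColor G lam l w w))
      else Sum.inr (snnVal G lam v₁ v₂)

/-! ### KP-GNN (shortest-path-distance kernel, peripheral encoder as powerful as 1-WL) -/

/-- The type of KP-GNN colors at iteration `l`. -/
def KPColor (C : Type) : ℕ → Type
  | 0 => IsoType C 2 × ℕ
  | l + 1 => KPColor C l × (Multiset (KPColor C l × KPColor C l) ⊕ Multiset (KPColor C l))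

/-- The KP-GNN refinement of pairs of vertices. -/
def kpColor (G : ColoredGraph C) : (l : ℕ) → G.V → G.V → KPColor C l
  | 0, v₁, v₂ => (G.isoType ![v₁, v₂], G.toSimple.dist v₁ v₂)
  | l + 1, v₁, v₂ =>
      (kpColor G l v₁ v₂,
        if v₁ = v₂ then
          Sum.inl (Finset.univ.val.map fun w => (kpColor G l w w, kpColor G l v₁ w))
        else
          Sum.inr ((G.sphere (G.toSimple.dist v₁ v₂) v₁ ∩ G.nbhd v₂).val.map fun w =>
            kpColor G l v₁ w))

/-- The type of colors of the (2,1)-FWL+ instance corresponding to KP-GNN. -/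
def KPFColor (C : Type) : ℕ → Type
  | 0 => IsoType C 2 × ℕ
  | l + 1 => KPFColor C l × Multiset (KPFColor C l)

/-- The (2,1)-FWL+ instance with `ES(v₁,v₂) = Q_{SPD(v₁,v₂)}(v₁) ∩ Q₁(v₂)` and initial
color the isomorphism type together with `SPD(v₁,v₂)`. -/
def kpfColor (G : ColoredGraph C) : (l : ℕ) → G.V → G.V → KPFColor C l
  | 0, v₁, v₂ => (G.isoType ![v₁, v₂], G.toSimple.dist v₁ v₂)
  | l + 1, v₁, v₂ =>
      (kpfColor G l v₁ v₂,
        (G.sphere (G.toSimple.dist v₁ v₂) v₁ ∩ G.nbhd v₂).val.map fun w => kpfColor G l v₁ w)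

/-! ### GDGNN -/

/-- The type of GDGNN colors at iteration `l`. -/
def GDColor (C : Type) : ℕ → Type
  | 0 => IsoType C 2
  | l + 1 => GDColor C l × Multiset (GDColor C l) × Multiset (GDColor C l)

/-- The GDGNN refinement of pairs of vertices. -/
def gdColor (G : ColoredGraph C) : (l : ℕ) → G.V → G.V → GDColor C l
  | 0, v₁, v₂ => G.isoType ![v₁, v₂]
  | l + 1, v₁, v₂ =>
      (gdColor G l v₁ v₂,
        (G.nbhd v₂).val.map fun w => gdColor G l v₁ w,
        (G.spSet v₁ v₂).val.map fun w => gdColor G l v₁ w)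

/-! ### N²-FWL -/

/-- The coordinatewise neighborhood of N²-FWL with hop parameter `h`:
`N²(v₁,v₂) = (N₁(v₂) × N₁(v₁)) ∩ (N_h(v₁) ∩ N_h(v₂))²`, written as a product. -/
def n2ES (G : ColoredGraph C) (h : ℕ) (v : Fin 2 → G.V) : Fin 2 → Finset G.V :=
  ![G.closedNbhd (v 1) ∩ G.ball h (v 0) ∩ G.ball h (v 1),
    G.closedNbhd (v 0) ∩ G.ball h (v 0) ∩ G.ball h (v 1)]

/-- The N²-FWL coloring with hop parameter `h`:
the (2,2)-FWL+ instance with neighborhood `N²(v₁,v₂)`. -/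
def n2Color (G : ColoredGraph C) (h : ℕ) : (l : ℕ) → (Fin 2 → G.V) → FWLColor C 2 2 l :=
  fwlpColor G 2 2 (n2ES G h)

end

section Stmt9Aux

open Function

/-! Auxiliary material for `stmt_9`. -/

/-- Write the values `w` into positions `τ` of `p`, last coordinate first. -/
def updMany {V : Type} {n : ℕ} : {s : ℕ} → (Fin n → V) → (Fin s → Fin n) → (Fin s → V) → (Fin n → V)
  | 0, p, _, _ => p
  | s+1, p, τ, w =>
      updMany (Function.update p (τ (Fin.last s)) (w (Fin.last s)))
        (τ ∘ Fin.castSucc) (w ∘ Fin.castSucc)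

lemma updMany_notin {V : Type} {n : ℕ} : ∀ {s : ℕ} (p : Fin n → V) (τ : Fin s → Fin n)
    (w : Fin s → V) (j : Fin n), (∀ i, j ≠ τ i) → updMany p τ w j = p j
  | 0, _, _, _, _, _ => rfl
  | s+1, p, τ, w, j, h => by
    show updMany (Function.update p (τ (Fin.last s)) (w (Fin.last s)))
        (τ ∘ Fin.castSucc) (w ∘ Fin.castSucc) j = p j
    rw [updMany_notin _ (τ ∘ Fin.castSucc) _ j (fun i => h i.castSucc)]
    exact Function.update_of_ne (h (Fin.last s)) _ _

lemma updMany_app {V : Type} {n : ℕ} : ∀ {s : ℕ} (p : Fin n → V) (τ : Fin s → Fin n),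
    Function.Injective τ → ∀ (w : Fin s → V) (i : Fin s), updMany p τ w (τ i) = w i
  | 0, _, _, _, _, i => i.elim0
  | s+1, p, τ, hτ, w, i => by
    induction i using Fin.lastCases with
    | last =>
        show updMany (Function.update p (τ (Fin.last s)) (w (Fin.last s)))
          (τ ∘ Fin.castSucc) (w ∘ Fin.castSucc) (τ (Fin.last s)) = w (Fin.last s)
        rw [updMany_notin]
        · exact Function.update_self _ _ _
        · intro i hi
          exact absurd (hτ hi) (Fin.ne_last_of_lt (Fin.castSucc_lt_last i)).symm
    | cast i =>
        show updMany (Function.update p (τ (Fin.last s)) (w (Fin.last s)))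
          (τ ∘ Fin.castSucc) (w ∘ Fin.castSucc) ((τ ∘ Fin.castSucc) i) = (w ∘ Fin.castSucc) i
        exact updMany_app _ _ (hτ.comp (Fin.castSucc_injective s)) _ i

lemma replaceList_comp {V W : Type} {k : ℕ} (q : V → W) (v : Fin k → V) :
    ∀ ps : List (Fin k × V),
      replaceList (q ∘ v) (ps.map fun pr => (pr.1, q pr.2)) = q ∘ replaceList v ps
  | [] => rfl
  | p :: ps => by
    simp only [List.map_cons, replaceList, replaceList_comp q v ps, Function.comp_update]

lemma replaceList_range {V : Type} {k : ℕ} (v : Fin k → V) :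
    ∀ (ps : List (Fin k × V)) (x : Fin k),
      replaceList v ps x = v x ∨ replaceList v ps x ∈ ps.map Prod.snd
  | [], x => Or.inl rfl
  | p :: ps, x => by
    by_cases hx : x = p.1
    · subst hx
      right
      simp [replaceList]
    · rw [replaceList, Function.update_of_ne hx]
      rcases replaceList_range v ps x with h | h
      · exact Or.inl h
      · exact Or.inr (by simp [h])

lemma replaceList_inj {V : Type} {k : ℕ} {v : Fin k → V} (hv : Function.Injective v) :
    ∀ ps : List (Fin k × V), (ps.map Prod.fst).Nodup → (ps.map Prod.snd).Nodup →
      (∀ b ∈ ps.map Prod.snd, b ∉ Set.range v) → Function.Injective (replaceList v ps)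
  | [], _, _, _ => hv
  | p :: ps, h1, h2, h3 => by
    simp only [List.map_cons, List.nodup_cons] at h1 h2
    have hrec : Function.Injective (replaceList v ps) :=
      replaceList_inj hv ps h1.2 h2.2 (fun b hb => h3 b (by simp [hb]))
    have hnr : ∀ x : Fin k, replaceList v ps x ≠ p.2 := by
      intro x hx
      rcases replaceList_range v ps x with h | h
      · exact h3 p.2 (by simp) ⟨x, h.symm.trans hx⟩
      · exact h2.1 (hx ▸ h)
    intro x y hxy
    rw [replaceList] at hxy
    by_cases hx : x = p.1 <;> by_cases hy : y = p.1
    · exact hx.trans hy.symm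
    · subst hx
      rw [Function.update_self, Function.update_of_ne hy] at hxy
      exact absurd hxy.symm (hnr y)
    · subst hy
      rw [Function.update_self, Function.update_of_ne hx] at hxy
      exact absurd hxy (hnr x)
    · rw [Function.update_of_ne hx, Function.update_of_ne hy] at hxy
      exact hrec hxy

lemma nbhdTuple_comp {V W : Type} (k t : ℕ) (q : V → W) (σ : Fin k → V) (τ : Fin t → V) :
    nbhdTuple k t (q ∘ σ) (q ∘ τ) = (nbhdTuple k t σ τ).map (fun ρ => q ∘ ρ) := by
  unfold nbhdTuple
  rw [List.map_flatMap]
  refine List.flatMap_congr ?_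
  intro m _
  rw [List.map_flatMap]
  refine List.flatMap_congr ?_
  intro ws _
  rw [List.map_map]
  refine List.map_congr_left ?_
  intro js _
  show replaceList (q ∘ σ) (js.zip (List.map (q ∘ τ) ws)) = q ∘ replaceList σ (js.zip (ws.map τ))
  rw [← List.map_map (g := q) (f := τ) (l := ws), List.zip_map_right, ← replaceList_comp]
  rfl

lemma nbhdTuple_inj {k t n : ℕ} {σ : Fin k → Fin n} {τ : Fin t → Fin n}
    (hσ : Function.Injective σ) (hτ : Function.Injective τ)
    (hd : ∀ i j, σ i ≠ τ j) :
    ∀ ρ ∈ nbhdTuple k t σ τ, Function.Injective ρ := by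
  intro ρ hρ
  simp only [nbhdTuple, List.mem_flatMap, List.mem_map] at hρ
  obtain ⟨m, _, ws, hws, js, hjs, rfl⟩ := hρ
  rw [List.mem_sublistsLen] at hws hjs
  have hlen : js.length = (ws.map τ).length := by simp [hws.2, hjs.2]
  have hfst : (js.zip (ws.map τ)).map Prod.fst = js := List.map_fst_zip (le_of_eq hlen)
  have hsnd : (js.zip (ws.map τ)).map Prod.snd = ws.map τ := List.map_snd_zip (ge_of_eq hlen)
  refine replaceList_inj hσ _ ?_ ?_ ?_
  · rw [hfst]; exact List.Nodup.sublist hjs.1 (List.nodup_finRange k)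
  · rw [hsnd]; exact (List.Nodup.sublist hws.1 (List.nodup_finRange t)).map hτ
  · rw [hsnd]
    rintro b hb ⟨i, rfl⟩
    obtain ⟨j, -, hj⟩ := List.mem_map.mp hb
    exact hd i j hj.symm

lemma wl_down {C : Type} {n : ℕ} {G H : ColoredGraph C} {l : ℕ}
    {p₁ : Fin n → G.V} {p₂ : Fin n → H.V}
    (h : wlColor G n (l+1) p₁ = wlColor H n (l+1) p₂) :
    wlColor G n l p₁ = wlColor H n l p₂ :=
  congrArg Prod.fst h

lemma wl_le {C : Type} {n : ℕ} {G H : ColoredGraph C} {a : ℕ}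
    {p₁ : Fin n → G.V} {p₂ : Fin n → H.V} :
    ∀ b : ℕ, wlColor G n (a+b) p₁ = wlColor H n (a+b) p₂ →
      wlColor G n a p₁ = wlColor H n a p₂
  | 0, h => h
  | b+1, h => wl_le b (wl_down h)

lemma wl_update {C : Type} {n : ℕ} {G H : ColoredGraph C} {l : ℕ}
    {p₁ : Fin n → G.V} {p₂ : Fin n → H.V}
    (h : wlColor G n (l+1) p₁ = wlColor H n (l+1) p₂) (j : Fin n) :
    Multiset.map (fun x => wlColor G n l (Function.update p₁ j x)) Finset.univ.val =
    Multiset.map (fun y => wlColor H n l (Function.update p₂ j y)) Finset.univ.val :=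
  congrFun (congrArg Prod.snd h) j

lemma map_eq_map_of_forall {α β γ δ : Type} {f : α → γ} {g : β → γ} {f' : α → δ} {g' : β → δ}
    {s : Multiset α} {t : Multiset β} (h : s.map f = t.map g)
    (himp : ∀ a b, f a = g b → f' a = g' b) : s.map f' = t.map g' := by
  rw [← Multiset.rel_eq] at h ⊢
  rw [Multiset.rel_map] at h ⊢
  exact h.mono fun a _ b _ hab => himp a b hab

lemma isoType_comp {C : Type} {G H : ColoredGraph C} {m n : ℕ}
    {p₁ : Fin n → G.V} {p₂ : Fin n → H.V}
    (h : G.isoType p₁ = H.isoType p₂) (σ : Fin m → Fin n) :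
    G.isoType (p₁ ∘ σ) = H.isoType (p₂ ∘ σ) := by
  simp only [ColoredGraph.isoType, Prod.mk.injEq] at h ⊢
  obtain ⟨h1, h2, h3⟩ := h
  refine ⟨funext fun i => congrFun h1 (σ i),
    funext fun i => funext fun j => ?_,
    funext fun i => funext fun j => ?_⟩
  · exact congrFun (congrFun h2 (σ i)) (σ j)
  · exact congrFun (congrFun h3 (σ i)) (σ j)

lemma hms_key {C : Type} {n : ℕ} {G H : ColoredGraph C} {α : Type} :
    ∀ (s L : ℕ) (A₁ : (Fin n → G.V) → α) (A₂ : (Fin n → H.V) → α),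
      (∀ q₁ q₂, wlColor G n L q₁ = wlColor H n L q₂ → A₁ q₁ = A₂ q₂) →
      ∀ (p₁ : Fin n → G.V) (p₂ : Fin n → H.V),
        wlColor G n (L + s) p₁ = wlColor H n (L + s) p₂ →
        ∀ τ : Fin s → Fin n,
          hms s (fun _ => Finset.univ) (fun w => A₁ (updMany p₁ τ w)) =
          hms s (fun _ => Finset.univ) (fun w => A₂ (updMany p₂ τ w))
  | 0, L, A₁, A₂, hA, p₁, p₂, h, τ => hA p₁ p₂ h
  | s+1, L, A₁, A₂, hA, p₁, p₂, h, τ => by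
    show Multiset.map (fun wl => hms s (fun _ => Finset.univ)
        fun w => A₁ (updMany p₁ τ (Fin.snoc w wl))) Finset.univ.val =
      Multiset.map (fun wl => hms s (fun _ => Finset.univ)
        fun w => A₂ (updMany p₂ τ (Fin.snoc w wl))) Finset.univ.val
    have hupd := wl_update (l := L + s) h (τ (Fin.last s))
    refine map_eq_map_of_forall hupd ?_
    intro x y hxy
    have key := hms_key s L A₁ A₂ hA _ _ hxy (τ ∘ Fin.castSucc)
    have e₁ : (fun w : Fin s → G.V => A₁ (updMany p₁ τ (Fin.snoc w x))) =
        fun w => A₁ (updMany (Function.update p₁ (τ (Fin.last s)) x) (τ ∘ Fin.castSucc) w) := by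
      funext w
      congr 1
      simp only [updMany, Fin.snoc_last, Fin.snoc_comp_castSucc]
    have e₂ : (fun w : Fin s → H.V => A₂ (updMany p₂ τ (Fin.snoc w y))) =
        fun w => A₂ (updMany (Function.update p₂ (τ (Fin.last s)) y) (τ ∘ Fin.castSucc) w) := by
      funext w
      congr 1
      simp only [updMany, Fin.snoc_last, Fin.snoc_comp_castSucc]
    rw [e₁, e₂]
    exact key

lemma exists_compl {k t : ℕ} (σ : Fin k → Fin (k+t)) (hσ : Function.Injective σ) :
    ∃ τ : Fin t → Fin (k+t), Function.Injective τ ∧ ∀ i j, σ i ≠ τ j := by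
  classical
  have hcard : (Finset.univ \ Finset.univ.image σ).card = t := by
    rw [Finset.card_sdiff_of_subset (Finset.subset_univ _), Finset.card_image_of_injective _ hσ]
    simp
  refine ⟨⇑((Finset.univ \ Finset.univ.image σ).orderEmbOfFin hcard),
    ((Finset.univ \ Finset.univ.image σ).orderEmbOfFin hcard).injective, fun i j hij => ?_⟩
  have hmem := Finset.orderEmbOfFin_mem (Finset.univ \ Finset.univ.image σ) hcard j
  rw [← hij] at hmem
  simp only [Finset.mem_sdiff, Finset.mem_univ, true_and, Finset.mem_image,
    not_exists] at hmem
  exact hmem i rfl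

lemma fwl_key {C : Type} (k t : ℕ) (G H : ColoredGraph C) :
    ∀ (l : ℕ) (p₁ : Fin (k+t) → G.V) (p₂ : Fin (k+t) → H.V),
      wlColor G (k+t) (t*l) p₁ = wlColor H (k+t) (t*l) p₂ →
      ∀ σ : Fin k → Fin (k+t), Function.Injective σ →
      fwlColor G k t l (p₁ ∘ σ) = fwlColor H k t l (p₂ ∘ σ)
  | 0, p₁, p₂, h, σ, hσ => isoType_comp h σ
  | l+1, p₁, p₂, h, σ, hσ => by
    obtain ⟨τ, hτ, hd⟩ := exists_compl σ hσ
    have hl : wlColor G (k+t) (t*l) p₁ = wlColor H (k+t) (t*l) p₂ :=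
      wl_le t h
    show (fwlColor G k t l (p₁ ∘ σ),
        hms t (fun _ => Finset.univ)
          fun w => (nbhdTuple k t (p₁ ∘ σ) w).map fun u => fwlColor G k t l u) =
      (fwlColor H k t l (p₂ ∘ σ),
        hms t (fun _ => Finset.univ)
          fun w => (nbhdTuple k t (p₂ ∘ σ) w).map fun u => fwlColor H k t l u)
    refine Prod.ext (fwl_key k t G H l p₁ p₂ hl σ hσ) ?_
    show hms t _ _ = hms t _ _
    set A₁ : (Fin (k+t) → G.V) → List (FWLColor C k t l) :=
      fun q => (nbhdTuple k t σ τ).map fun ρ => fwlColor G k t l (q ∘ ρ) with hA₁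
    set A₂ : (Fin (k+t) → H.V) → List (FWLColor C k t l) :=
      fun q => (nbhdTuple k t σ τ).map fun ρ => fwlColor H k t l (q ∘ ρ) with hA₂
    have hA : ∀ q₁ q₂, wlColor G (k+t) (t*l) q₁ = wlColor H (k+t) (t*l) q₂ →
        A₁ q₁ = A₂ q₂ := by
      intro q₁ q₂ hq
      refine List.map_congr_left ?_
      intro ρ hρ
      exact fwl_key k t G H l q₁ q₂ hq ρ (nbhdTuple_inj hσ hτ hd ρ hρ)
    have e₁ : (fun w : Fin t → G.V =>
        (nbhdTuple k t (p₁ ∘ σ) w).map fun u => fwlColor G k t l u) =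
        fun w => A₁ (updMany p₁ τ w) := by
      funext w
      have hqσ : updMany p₁ τ w ∘ σ = p₁ ∘ σ :=
        funext fun i => updMany_notin p₁ τ w (σ i) (fun j => hd i j)
      have hqτ : updMany p₁ τ w ∘ τ = w :=
        funext fun i => updMany_app p₁ τ hτ w i
      have hnb : nbhdTuple k t (p₁ ∘ σ) w =
          nbhdTuple k t (updMany p₁ τ w ∘ σ) (updMany p₁ τ w ∘ τ) := by
        rw [hqσ, hqτ]
      rw [hnb, nbhdTuple_comp k t (updMany p₁ τ w) σ τ, List.map_map]
      rfl
    have e₂ : (fun w : Fin t → H.V =>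
        (nbhdTuple k t (p₂ ∘ σ) w).map fun u => fwlColor H k t l u) =
        fun w => A₂ (updMany p₂ τ w) := by
      funext w
      have hqσ : updMany p₂ τ w ∘ σ = p₂ ∘ σ :=
        funext fun i => updMany_notin p₂ τ w (σ i) (fun j => hd i j)
      have hqτ : updMany p₂ τ w ∘ τ = w :=
        funext fun i => updMany_app p₂ τ hτ w i
      have hnb : nbhdTuple k t (p₂ ∘ σ) w =
          nbhdTuple k t (updMany p₂ τ w ∘ σ) (updMany p₂ τ w ∘ τ) := by
        rw [hqσ, hqτ]
      rw [hnb, nbhdTuple_comp k t (updMany p₂ τ w) σ τ, List.map_map]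
      rfl
    rw [e₁, e₂]
    exact hms_key t (t*l) A₁ A₂ hA p₁ p₂ h τ

end Stmt9Aux

/-- Suppose the stable `(k+t)`-WL color histograms of `G` and `H` are
equal.  Then any tuples `(v₁,w₁)` in `G` and `(v₂,w₂)` in `H` with equal stable
`(k+t)`-WL colors also have equal stable extended `(k,t)`-FWL colors. -/
theorem stmt_9 {C : Type} (k t : ℕ) (hk : 2 ≤ k) (ht : 1 ≤ t)
    (G H : ColoredGraph C)
    (hhist : ∀ l, wlHistogram G (k + t) l = wlHistogram H (k + t) l)
    (v₁ : Fin k → G.V) (v₂ : Fin k → H.V) (w₁ : Fin t → G.V) (w₂ : Fin t → H.V)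
    (hcol : ∀ l, wlColor G (k + t) l (Fin.append v₁ w₁) =
      wlColor H (k + t) l (Fin.append v₂ w₂)) :
    ∀ l, fwlExtColor G k t l v₁ w₁ = fwlExtColor H k t l v₂ w₂ := by
  intro l
  have hq : wlColor G (k+t) (t*l) (Fin.append v₁ w₁) = wlColor H (k+t) (t*l) (Fin.append v₂ w₂) :=
    hcol (t*l)
  have hca : Function.Injective (Fin.castAdd t : Fin k → Fin (k+t)) :=
    Fin.castAdd_injective k t
  have hna : Function.Injective (Fin.natAdd k : Fin t → Fin (k+t)) := by
    intro a b hab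
    have := congrArg Fin.val hab
    simp only [Fin.coe_natAdd] at this
    exact Fin.ext (by omega)
  have hdisj : ∀ (i : Fin k) (j : Fin t),
      (Fin.castAdd t i : Fin (k+t)) ≠ Fin.natAdd k j := by
    intro i j hij
    have := congrArg Fin.val hij
    simp only [Fin.coe_castAdd, Fin.coe_natAdd] at this
    have hi := i.isLt
    omega
  set q₁ : Fin (k+t) → G.V := Fin.append v₁ w₁ with hq₁
  set q₂ : Fin (k+t) → H.V := Fin.append v₂ w₂ with hq₂
  have hv₁ : v₁ = q₁ ∘ Fin.castAdd t :=
    funext fun i => (Fin.append_left v₁ w₁ i).symm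
  have hw₁ : w₁ = q₁ ∘ Fin.natAdd k :=
    funext fun i => (Fin.append_right v₁ w₁ i).symm
  have hv₂ : v₂ = q₂ ∘ Fin.castAdd t :=
    funext fun i => (Fin.append_left v₂ w₂ i).symm
  have hw₂ : w₂ = q₂ ∘ Fin.natAdd k :=
    funext fun i => (Fin.append_right v₂ w₂ i).symm
  unfold fwlExtColor
  rw [hv₁, hw₁, hv₂, hw₂, nbhdTuple_comp, nbhdTuple_comp, List.map_map, List.map_map]
  refine List.map_congr_left ?_
  intro ρ hρ
  exact fwl_key k t G H l _ _ hq ρ (nbhdTuple_inj hca hna hdisj ρ hρ)
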